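/- arXiv:1009.4408 — 4 statements merged into one kernel-verified Lean document; each statement's English description precedes it below -/
import Mathlib

section
/- For every integer m ≥ 1, the product ∏_{j=1}^m (j - 1/2) is greater than (m/e)^m. -/
/-!
Writing `n! = s(n) √(2n) (n/e)^n` with the Stirling sequence `s`, the product equals
`(2m)! / (4^m m!) = √2 · (s(2m) / s(m)) · (m/e)^m`. Since `s` decreases from `s(1) = e/√2`
to its limit `√π`, the factor `√2 · s(2m) / s(m)` is at least `2√π / e > 1`.
-/

open Finset Real Stirling
open scoped Nat

lemma prod_Icc_natCast_sub_half (m : ℕ) :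
    ∏ j ∈ Icc 1 m, ((j : ℝ) - 1 / 2) = (2 * m)! / (4 ^ m * m !) := by
  induction m with
  | zero => simp
  | succ n ih =>
    rw [← insert_Icc_right_eq_Icc_add_one (by omega), prod_insert (by simp), ih,
      show 2 * (n + 1) = 2 * n + 1 + 1 by ring, Nat.factorial_succ, Nat.factorial_succ,
      Nat.factorial_succ]
    push_cast
    field_simp
    ring

lemma Stirling.stirlingSeq_le_stirlingSeq_one {n : ℕ} (hn : n ≠ 0) :
    stirlingSeq n ≤ exp 1 / √2 := by
  obtain ⟨k, rfl⟩ := Nat.exists_eq_succ_of_ne_zero hn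
  rw [← stirlingSeq_one]
  exact stirlingSeq'_antitone (Nat.zero_le k)

lemma Stirling.factorial_two_mul_div_eq {n : ℕ} (hn : n ≠ 0) :
    ((2 * n)! : ℝ) / (4 ^ n * n !) =
      √2 * (stirlingSeq (2 * n) / stirlingSeq n) * (n / exp 1) ^ n := by
  have hsqrt : √(2 * ((2 * n : ℕ) : ℝ)) = √2 * √(2 * n) := by
    push_cast
    rw [← sqrt_mul zero_le_two]
  have hpow : ((2 * n : ℕ) / exp 1) ^ (2 * n) = 4 ^ n * ((n / exp 1) ^ n) ^ 2 := by
    push_cast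
    rw [mul_div_assoc, mul_pow, pow_mul, pow_mul]
    norm_num
    ring
  have : (0 : ℝ) < n := by positivity
  simp only [stirlingSeq, hsqrt, hpow]
  field_simp

lemma exp_one_lt_two_mul_sqrt_pi : exp 1 < 2 * √π := by
  have h : (1.7 : ℝ) < √π := by
    rw [lt_sqrt (by norm_num)]
    linarith [pi_gt_three]
  linarith [exp_one_lt_d9]

lemma Stirling.one_lt_sqrt_two_mul_stirlingSeq_two_mul_div {n : ℕ} (hn : n ≠ 0) :
    1 < √2 * (stirlingSeq (2 * n) / stirlingSeq n) := by
  have hsn : 0 < stirlingSeq n := (sqrt_pos.2 pi_pos).trans_le (sqrt_pi_le_stirlingSeq hn)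
  have h2n : √π ≤ stirlingSeq (2 * n) := sqrt_pi_le_stirlingSeq (by omega)
  have h2 : √2 * √2 = 2 := mul_self_sqrt zero_le_two
  calc (1 : ℝ) < √2 * (√π / (exp 1 / √2)) := by
        rw [div_div_eq_mul_div, ← mul_div_assoc, mul_comm √π, ← mul_assoc, h2,
          one_lt_div (exp_pos 1)]
        exact exp_one_lt_two_mul_sqrt_pi
    _ ≤ √2 * (stirlingSeq (2 * n) / stirlingSeq n) := by
        gcongr
        · exact (sqrt_nonneg π).trans h2n
        · exact stirlingSeq_le_stirlingSeq_one hn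

theorem halfint_product_gt (m : ℕ) (hm : 1 ≤ m) :
    ∏ j ∈ Finset.Icc 1 m, ((j : ℝ) - 1 / 2) > ((m : ℝ) / Real.exp 1) ^ m := by
  have hm0 : m ≠ 0 := by omega
  rw [prod_Icc_natCast_sub_half, factorial_two_mul_div_eq hm0]
  exact lt_mul_left (by positivity) (one_lt_sqrt_two_mul_stirlingSeq_two_mul_div hm0)
end

section
/- Let α be a real number, and let k, x, y be integers with k ≥ 1 and x ≤ y. Let (kα) denote the nearest integer to kα. If (kα) ∉ [x,y], then ∏_{j=x}^{y} |j - kα| ≥ (1/2) ((y-x)/e)^{y-x}. -/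
/-!
Since `round (k α)` lies outside `[x, y]`, the point `k α` lies at least `1/2` beyond one endpoint
of `[x, y]`, so the factors `|j - k α|` dominate `1/2, 3/2, …, n + 1/2` with `n = y - x`. Their
product is at least `n! / 2`, and `n! ≥ (n / e) ^ n` by a single term of the exponential series.
-/

open Finset Real Nat

lemma pow_div_exp_one_le_factorial (n : ℕ) : ((n : ℝ) / exp 1) ^ n ≤ n ! := by
  have h := pow_div_factorial_le_exp (n : ℝ) n.cast_nonneg n
  rw [← exp_one_pow, div_le_iff₀ (by positivity)] at h
  rwa [div_pow, div_le_iff₀ (by positivity), mul_comm]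

lemma half_mul_factorial_le_prod_range_add_half (n : ℕ) :
    (1 / 2 : ℝ) * n ! ≤ ∏ i ∈ range (n + 1), ((i : ℝ) + 1 / 2) := by
  rw [prod_range_succ', ← prod_range_add_one_eq_factorial, Nat.cast_zero, zero_add, mul_comm]
  push_cast
  gcongr ?_ * _
  exact prod_le_prod (fun i _ => by positivity) (fun i _ => by linarith)

lemma prod_Icc_abs_sub_neg (x y : ℤ) (t : ℝ) :
    ∏ j ∈ Icc (-y) (-x), |(j : ℝ) - -t| = ∏ j ∈ Icc x y, |(j : ℝ) - t| := by
  refine prod_nbij' (- ·) (- ·) ?_ ?_ ?_ ?_ ?_ <;> simp only [mem_Icc, neg_neg, implies_true]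
  · intro j hj; omega
  · intro j hj; omega
  · intro j _
    rw [Int.cast_neg, ← abs_neg]
    ring_nf

lemma prod_range_add_half_le_prod_Icc_abs_sub_of_le_sub_half {t : ℝ} {x : ℤ} (y : ℤ)
    (ht : t ≤ x - 1 / 2) :
    ∏ i ∈ range (y + 1 - x).toNat, ((i : ℝ) + 1 / 2) ≤ ∏ j ∈ Icc x y, |(j : ℝ) - t| := by
  rw [Int.Icc_eq_finset_map, prod_map]
  gcongr with i
  simp only [Function.Embedding.trans_apply, Nat.castEmbedding_apply, addLeftEmbedding_apply,
    Int.cast_add, Int.cast_natCast]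
  exact le_abs.mpr (Or.inl (by linarith))

lemma prod_range_add_half_le_prod_Icc_abs_sub_of_add_half_le {t : ℝ} {y : ℤ} (x : ℤ)
    (ht : y + 1 / 2 ≤ t) :
    ∏ i ∈ range (y + 1 - x).toNat, ((i : ℝ) + 1 / 2) ≤ ∏ j ∈ Icc x y, |(j : ℝ) - t| := by
  have h := prod_range_add_half_le_prod_Icc_abs_sub_of_le_sub_half (t := -t) (x := -y) (-x)
    (by push_cast; linarith)
  rwa [prod_Icc_abs_sub_neg, show -x + 1 - -y = y + 1 - x by ring] at h

lemma le_sub_half_of_round_lt {t : ℝ} {x : ℤ} (h : round t < x) : t ≤ x - 1 / 2 := by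
  have : (round t : ℝ) + 1 ≤ x := by exact_mod_cast h
  linarith [sub_half_lt_round t]

lemma add_half_le_of_lt_round {t : ℝ} {y : ℤ} (h : y < round t) : y + 1 / 2 ≤ t := by
  have : (y : ℝ) + 1 ≤ round t := by exact_mod_cast h
  linarith [round_le_add_half t]

theorem prod_abs_sub_mul_ge_of_round_not_mem_general (α : ℝ)
    (k x y : ℤ) (hxy : x ≤ y)
    (h : round ((k : ℝ) * α) ∉ Set.Icc x y) :
    ∏ j ∈ Finset.Icc x y, |(j : ℝ) - (k : ℝ) * α| ≥
      (1 / 2) * (((y - x : ℤ) : ℝ) / Real.exp 1) ^ (y - x).toNat := by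
  set n := (y - x).toNat
  have hn : (y + 1 - x).toNat = n + 1 := by omega
  have hcast : ((y - x : ℤ) : ℝ) = n := by exact_mod_cast (by omega : y - x = n)
  have hprod : ∏ i ∈ range (n + 1), ((i : ℝ) + 1 / 2) ≤
      ∏ j ∈ Finset.Icc x y, |(j : ℝ) - (k : ℝ) * α| := by
    rw [← hn]
    rcases not_and_or.mp h with hx | hy
    · exact prod_range_add_half_le_prod_Icc_abs_sub_of_le_sub_half y
        (le_sub_half_of_round_lt (not_le.mp hx))
    · exact prod_range_add_half_le_prod_Icc_abs_sub_of_add_half_le x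
        (add_half_le_of_lt_round (not_le.mp hy))
  calc (1 / 2) * (((y - x : ℤ) : ℝ) / exp 1) ^ n
      ≤ (1 / 2) * n ! := by rw [hcast]; gcongr; exact pow_div_exp_one_le_factorial n
    _ ≤ ∏ i ∈ range (n + 1), ((i : ℝ) + 1 / 2) := half_mul_factorial_le_prod_range_add_half n
    _ ≤ _ := hprod

theorem prod_abs_sub_mul_ge_of_round_not_mem (α : ℝ) (hα : Irrational α)
    (k x y : ℤ) (hk : 1 ≤ k) (hxy : x ≤ y)
    (h : round ((k : ℝ) * α) ∉ Set.Icc x y) :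
    ∏ j ∈ Finset.Icc x y, |(j : ℝ) - (k : ℝ) * α| ≥
      (1 / 2) * (((y - x : ℤ) : ℝ) / Real.exp 1) ^ (y - x).toNat :=
  prod_abs_sub_mul_ge_of_round_not_mem_general α k x y hxy h
end

section
/- Let α be an irrational real number, and let k, x, y be integers with k ≥ 1 and x ≤ y. Let (kα) denote the nearest integer to kα. If x ≤ (kα) ≤ y, then ∏_{j=x}^{y} |j - kα| ≥ ((y-x)/(2e))^{y-x} · dist(kα, ℤ). -/
/-!
Write `t = kα`, `n` for its nearest integer, `x = n - a` and `y = n + b`. Since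
`|t - n| ≤ 1/2`, the factors at `j = n ∓ (i + 1)` are at least `i + 1/2`, so the product is
at least `|t - n| · P a · P b` with `P a = ∏_{i<a} (i + 1/2)`. Comparing `(i + 1/2)²` with
`i (i + 1)` gives `a!² ≤ 4a · (P a)²`, and Stirling's bound `√(2πa) (a/e)^a ≤ a!` with
`2π ≥ 4` turns this into `P a ≥ (a/e)^a`. Finally `u ≤ e^(u-1)`, applied to `u = (a+b)/(2a)`
and `u = (a+b)/(2b)`, gives `((a+b)/(2e))^(a+b) ≤ (a/e)^a (b/e)^b`.
-/

open Real Finset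
open scoped Nat

lemma factorial_sq_le_four_mul_prod_add_half_sq {a : ℕ} (ha : 1 ≤ a) :
    (a ! : ℝ) ^ 2 ≤ 4 * a * (∏ i ∈ range a, ((i : ℝ) + 1 / 2)) ^ 2 := by
  induction a, ha using Nat.le_induction with
  | base => norm_num
  | succ a ha ih =>
    rw [Nat.factorial_succ, prod_range_succ]
    push_cast
    nlinarith [mul_le_mul_of_nonneg_left ih (sq_nonneg ((a : ℝ) + 1))]

lemma div_exp_one_pow_le_prod_add_half (a : ℕ) :
    ((a : ℝ) / exp 1) ^ a ≤ ∏ i ∈ range a, ((i : ℝ) + 1 / 2) := by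
  rcases Nat.eq_zero_or_pos a with rfl | ha
  · simp
  set P := ∏ i ∈ range a, ((i : ℝ) + 1 / 2)
  have hsq : 4 * a * (((a : ℝ) / exp 1) ^ a) ^ 2 ≤ 4 * a * P ^ 2 :=
    calc 4 * a * (((a : ℝ) / exp 1) ^ a) ^ 2
        ≤ (√(2 * π * a) * ((a : ℝ) / exp 1) ^ a) ^ 2 := by
          rw [mul_pow, sq_sqrt (by positivity)]
          gcongr
          linarith [pi_gt_three]
      _ ≤ (a ! : ℝ) ^ 2 := by gcongr; exact Stirling.le_factorial_stirling a
      _ ≤ 4 * a * P ^ 2 := factorial_sq_le_four_mul_prod_add_half_sq ha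
  exact (pow_le_pow_iff_left₀ (by positivity) (prod_nonneg fun i _ => by positivity)
    two_ne_zero).1 (le_of_mul_le_mul_left hsq (by positivity))

lemma pow_le_div_exp_one_pow_mul_exp (a : ℕ) {c : ℝ} (hc : 0 ≤ c) :
    c ^ a ≤ ((a : ℝ) / exp 1) ^ a * exp c := by
  rcases Nat.eq_zero_or_pos a with rfl | ha
  · simpa using one_le_exp hc
  have ha' : (0 : ℝ) < a := by exact_mod_cast ha
  have key : c / a ≤ exp (c / a - 1) := by linarith [add_one_le_exp (c / a - 1)]
  calc c ^ a = (a : ℝ) ^ a * (c / a) ^ a := by rw [← mul_pow, mul_div_cancel₀ _ ha'.ne']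
    _ ≤ (a : ℝ) ^ a * exp (c / a - 1) ^ a := by gcongr
    _ = ((a : ℝ) / exp 1) ^ a * exp c := by
      rw [div_pow, ← exp_nat_mul, ← exp_nat_mul, mul_sub, mul_div_cancel₀ _ ha'.ne', mul_one,
        exp_sub]
      ring

lemma add_div_two_mul_exp_one_pow_le (a b : ℕ) :
    (((a + b : ℕ) : ℝ) / (2 * exp 1)) ^ (a + b) ≤
      ((a : ℝ) / exp 1) ^ a * ((b : ℝ) / exp 1) ^ b := by
  set c : ℝ := (a + b : ℕ) / 2
  have hc : 0 ≤ c := by positivity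
  have hexp : exp c * exp c = exp 1 ^ (a + b) := by
    rw [← exp_add, add_halves, ← exp_nat_mul, mul_one]
  calc (((a + b : ℕ) : ℝ) / (2 * exp 1)) ^ (a + b) = c ^ a * c ^ b / exp 1 ^ (a + b) := by
        rw [← pow_add, ← div_pow, div_div]
    _ ≤ ((a : ℝ) / exp 1) ^ a * exp c * (((b : ℝ) / exp 1) ^ b * exp c) / exp 1 ^ (a + b) :=
        by gcongr <;> exact pow_le_div_exp_one_pow_mul_exp _ hc
    _ = ((a : ℝ) / exp 1) ^ a * ((b : ℝ) / exp 1) ^ b := by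
        rw [mul_mul_mul_comm, hexp, mul_div_assoc, div_self (by positivity), mul_one]

lemma prod_Icc_sub_add {M : Type*} [CommMonoid M] (f : ℤ → M) (n : ℤ) (a b : ℕ) :
    ∏ j ∈ Icc (n - a) (n + b), f j =
      (∏ i ∈ range a, f (n - (i + 1))) * f n * ∏ i ∈ range b, f (n + (i + 1)) := by
  have hcard : (n + b + 1 - (n - a)).toNat = a + 1 + b := by omega
  rw [Int.Icc_eq_finset_map, prod_map, hcard, prod_range_add, prod_range_succ,
    ← prod_range_reflect _ a]
  simp only [Function.Embedding.trans_apply, Nat.castEmbedding_apply, addLeftEmbedding_apply]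
  congr 2
  · refine prod_congr rfl fun i hi => congrArg f ?_
    have := mem_range.1 hi
    omega
  · simp
  · funext i
    exact congrArg f (by push_cast; ring)

variable {t : ℝ} {n : ℤ}

lemma add_half_le_abs_sub_sub (hn : |t - n| ≤ 1 / 2) (i : ℕ) :
    (i : ℝ) + 1 / 2 ≤ |((n - (i + 1) : ℤ) : ℝ) - t| := by
  rw [abs_sub_comm]
  push_cast
  have := (abs_le.1 hn).1
  exact le_abs.2 (Or.inl (by linarith))

lemma add_half_le_abs_add_sub (hn : |t - n| ≤ 1 / 2) (i : ℕ) :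
    (i : ℝ) + 1 / 2 ≤ |((n + (i + 1) : ℤ) : ℝ) - t| := by
  push_cast
  have := (abs_le.1 hn).2
  exact le_abs.2 (Or.inl (by linarith))

lemma prod_add_half_mul_le_prod_abs_sub (hn : |t - n| ≤ 1 / 2) (a b : ℕ) :
    (∏ i ∈ range a, ((i : ℝ) + 1 / 2)) * |t - n| * ∏ i ∈ range b, ((i : ℝ) + 1 / 2) ≤
      ∏ j ∈ Icc (n - a) (n + b), |(j : ℝ) - t| := by
  rw [prod_Icc_sub_add (fun j : ℤ => |(j : ℝ) - t|), abs_sub_comm t]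
  gcongr with i _ i _
  · exact add_half_le_abs_sub_sub hn i
  · exact add_half_le_abs_add_sub hn i

theorem prod_abs_sub_mul_ge_of_round_mem_general (α : ℝ)
    (k x y : ℤ)
    (h : round ((k : ℝ) * α) ∈ Set.Icc x y) :
    ∏ j ∈ Finset.Icc x y, |(j : ℝ) - (k : ℝ) * α| ≥
      (((y - x : ℤ) : ℝ) / (2 * Real.exp 1)) ^ (y - x).toNat *
        |(k : ℝ) * α - round ((k : ℝ) * α)| := by
  set t := (k : ℝ) * α
  obtain ⟨a, ha⟩ := Int.eq_ofNat_of_zero_le (sub_nonneg.2 h.1)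
  obtain ⟨b, hb⟩ := Int.eq_ofNat_of_zero_le (sub_nonneg.2 h.2)
  obtain rfl : x = round t - a := by omega
  obtain rfl : y = round t + b := by omega
  have hlen : round t + b - (round t - a) = ((a + b : ℕ) : ℤ) := by push_cast; ring
  rw [hlen, Int.toNat_natCast, Int.cast_natCast, ge_iff_le]
  calc (((a + b : ℕ) : ℝ) / (2 * exp 1)) ^ (a + b) * |t - round t|
      ≤ ((a : ℝ) / exp 1) ^ a * ((b : ℝ) / exp 1) ^ b * |t - round t| := by
        gcongr; exact add_div_two_mul_exp_one_pow_le a b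
    _ ≤ (∏ i ∈ range a, ((i : ℝ) + 1 / 2)) * |t - round t| *
          ∏ i ∈ range b, ((i : ℝ) + 1 / 2) := by
        rw [mul_right_comm]
        gcongr
        · exact div_exp_one_pow_le_prod_add_half a
        · exact div_exp_one_pow_le_prod_add_half b
    _ ≤ _ := prod_add_half_mul_le_prod_abs_sub (abs_sub_round t) a b

theorem prod_abs_sub_mul_ge_of_round_mem (α : ℝ) (hα : Irrational α)
    (k x y : ℤ) (hk : 1 ≤ k) (hxy : x ≤ y)
    (h : round ((k : ℝ) * α) ∈ Set.Icc x y) :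
    ∏ j ∈ Finset.Icc x y, |(j : ℝ) - (k : ℝ) * α| ≥
      (((y - x : ℤ) : ℝ) / (2 * Real.exp 1)) ^ (y - x).toNat *
        |(k : ℝ) * α - round ((k : ℝ) * α)| :=
  prod_abs_sub_mul_ge_of_round_mem_general α k x y h
end

section
/- Let α ∈ (0,1) be irrational with continued fraction convergents p_s/q_s, and define D_α(n) = ∏_{k=1}^n dist(kα, ℤ). If q_s ≤ n < q_{s+1} and 0 ≤ m ≤ n, then D_α(m) · D_α(n-m) ≥ 2^{-n} n^{-2n} q_{s+1}^{-n/q_s}. -/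
noncomputable def cfGauss (α : ℝ) : ℕ → ℝ
  | 0 => Int.fract α
  | s + 1 => Int.fract (1 / cfGauss α s)

noncomputable def cfA (α : ℝ) : ℕ → ℤ
  | 0 => ⌊α⌋
  | s + 1 => ⌊1 / cfGauss α s⌋

noncomputable def cfPQ (α : ℝ) : ℕ → ℤ × ℤ
  | 0 => (⌊α⌋, 1)
  | 1 => (cfA α 1 * ⌊α⌋ + 1, cfA α 1)
  | s + 2 => (cfA α (s + 2) * (cfPQ α (s + 1)).1 + (cfPQ α s).1,
              cfA α (s + 2) * (cfPQ α (s + 1)).2 + (cfPQ α s).2)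

/-- Numerator `p_s` of the `s`-th continued fraction convergent of `α`. -/
noncomputable def cfP (α : ℝ) (s : ℕ) : ℤ := (cfPQ α s).1

/-- Denominator `q_s` of the `s`-th continued fraction convergent of `α`. -/
noncomputable def cfQ (α : ℝ) (s : ℕ) : ℤ := (cfPQ α s).2

/-- Distance from a real number to the nearest integer. -/
noncomputable def distZ (x : ℝ) : ℝ := |x - round x|

/-- `D_α(n) = ∏_{k=1}^n dist(kα, ℤ)`. -/
noncomputable def Dalpha (α : ℝ) (n : ℕ) : ℝ := ∏ k ∈ Finset.Icc 1 n, distZ (k * α)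

/-! Let `γ_t` be the iterates of the Gauss map, so that `|q_t α - p_t| = γ₀ ⋯ γ_t` and
`q_{t+1} γ₀⋯γ_t + q_t γ₀⋯γ_{t+1} = 1`; hence `γ₀⋯γ_s ≥ 1 / (2 q_{s+1})`. Every `1 ≤ k < q_{s+1}`
is `x q_{s+1} + y q_s` with `y ≠ 0` and `x y ≤ 0`, so `‖kα‖ ≥ |y| γ₀⋯γ_s ≥ 1 / (2 q_{s+1})`.
If moreover `q_s ∤ k` then `x ≠ 0`, which forces `|y| q_s ≥ q_{s+1} - k` and `‖kα‖ ≥ 1 / (4n)`.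
Of the `n` factors of `D_α(m) D_α(n-m)` at most `n / q_s` are multiples of `q_s`; these are
bounded below by `1 / (2 q_{s+1})` and the others by `1 / (4n) ≥ 1 / (2n²)`. -/

section ContinuedFraction

variable {α : ℝ}

lemma Irrational.fract_mem_Ioo {x : ℝ} (h : Irrational x) : Int.fract x ∈ Set.Ioo (0 : ℝ) 1 :=
  ⟨(Int.fract_nonneg x).lt_of_ne fun h0 =>
      (h.sub_intCast ⌊x⌋) ⟨0, by rw [← Int.fract, ← h0]; simp⟩,
    Int.fract_lt_one x⟩

lemma cfGauss_irrational (hα : Irrational α) : ∀ t, Irrational (cfGauss α t)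
  | 0 => hα.sub_intCast _
  | t + 1 => by
    simpa only [cfGauss, one_div, Int.fract] using (cfGauss_irrational hα t).inv.sub_intCast _

lemma cfGauss_mem_Ioo (hα : Irrational α) : ∀ t, cfGauss α t ∈ Set.Ioo (0 : ℝ) 1
  | 0 => hα.fract_mem_Ioo
  | t + 1 => by simpa only [cfGauss, one_div] using (cfGauss_irrational hα t).inv.fract_mem_Ioo

lemma cfGauss_succ (t : ℕ) : cfGauss α (t + 1) = 1 / cfGauss α t - cfA α (t + 1) := rfl

lemma one_le_cfA_succ (hα : Irrational α) (t : ℕ) : 1 ≤ cfA α (t + 1) := by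
  obtain ⟨hpos, hlt⟩ := cfGauss_mem_Ioo hα t
  rw [cfA, Int.le_floor, Int.cast_one, le_div_iff₀ hpos]
  linarith

lemma cfQ_zero : cfQ α 0 = 1 := rfl
lemma cfQ_one : cfQ α 1 = cfA α 1 := rfl
lemma cfQ_add_two (t : ℕ) : cfQ α (t + 2) = cfA α (t + 2) * cfQ α (t + 1) + cfQ α t := rfl
lemma cfP_zero : cfP α 0 = ⌊α⌋ := rfl
lemma cfP_one : cfP α 1 = cfA α 1 * ⌊α⌋ + 1 := rfl
lemma cfP_add_two (t : ℕ) : cfP α (t + 2) = cfA α (t + 2) * cfP α (t + 1) + cfP α t := rfl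

lemma one_le_cfQ (hα : Irrational α) : ∀ t, 1 ≤ cfQ α t
  | 0 => le_rfl
  | 1 => one_le_cfA_succ hα 0
  | t + 2 => by
    have := one_le_cfQ hα t
    have := one_le_cfQ hα (t + 1)
    rw [cfQ_add_two]
    nlinarith [one_le_cfA_succ hα (t + 1)]

lemma cfQ_le_cfQ_succ (hα : Irrational α) : ∀ t, cfQ α t ≤ cfQ α (t + 1)
  | 0 => one_le_cfA_succ hα 0
  | t + 1 => by
    rw [cfQ_add_two]
    nlinarith [one_le_cfA_succ hα (t + 1), one_le_cfQ hα t, one_le_cfQ hα (t + 1)]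

lemma cfP_succ_mul_cfQ_sub_cfP_mul_cfQ_succ :
    ∀ t, cfP α (t + 1) * cfQ α t - cfP α t * cfQ α (t + 1) = (-1) ^ t
  | 0 => by rw [cfP_zero, cfP_one, cfQ_zero, cfQ_one]; ring
  | t + 1 => by
    rw [cfP_add_two, cfQ_add_two, pow_succ, ← cfP_succ_mul_cfQ_sub_cfP_mul_cfQ_succ t]
    ring

/-- `γ₀ ⋯ γₜ = |qₜ α - pₜ|`, the error of the `t`-th convergent (`cfQ_mul_sub_cfP`). -/
noncomputable def cfGaussProd (α : ℝ) (t : ℕ) : ℝ := ∏ i ∈ Finset.range (t + 1), cfGauss α i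

lemma cfGaussProd_zero : cfGaussProd α 0 = cfGauss α 0 := Finset.prod_range_one _

lemma cfGaussProd_succ (t : ℕ) : cfGaussProd α (t + 1) = cfGaussProd α t * cfGauss α (t + 1) :=
  Finset.prod_range_succ _ _

lemma cfGaussProd_pos (hα : Irrational α) (t : ℕ) : 0 < cfGaussProd α t :=
  Finset.prod_pos fun i _ => (cfGauss_mem_Ioo hα i).1

lemma cfGaussProd_succ_le (hα : Irrational α) (t : ℕ) :
    cfGaussProd α (t + 1) ≤ cfGaussProd α t := by
  rw [cfGaussProd_succ]
  exact mul_le_of_le_one_right (cfGaussProd_pos hα t).le (cfGauss_mem_Ioo hα (t + 1)).2.le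

lemma cfGaussProd_add_two (hα : Irrational α) (t : ℕ) :
    cfGaussProd α (t + 2) = cfGaussProd α t - cfA α (t + 2) * cfGaussProd α (t + 1) := by
  have hγ := (cfGauss_mem_Ioo hα (t + 1)).1.ne'
  rw [cfGaussProd_succ (t + 1), cfGaussProd_succ t, cfGauss_succ (t + 1)]
  field_simp

lemma cfGaussProd_one (hα : Irrational α) : cfGaussProd α 1 = 1 - cfA α 1 * cfGauss α 0 := by
  have hγ := (cfGauss_mem_Ioo hα 0).1.ne'
  rw [cfGaussProd_succ, cfGaussProd_zero, cfGauss_succ]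
  field_simp

lemma cfQ_mul_sub_cfP (hα : Irrational α) :
    ∀ t, (cfQ α t : ℝ) * α - cfP α t = (-1) ^ t * cfGaussProd α t
  | 0 => by
    rw [cfQ_zero, cfP_zero, cfGaussProd_zero, cfGauss, Int.fract]
    push_cast
    ring
  | 1 => by
    rw [cfQ_one, cfP_one, cfGaussProd_one hα, cfGauss, Int.fract]
    push_cast
    ring
  | t + 2 => by
    rw [cfQ_add_two, cfP_add_two, cfGaussProd_add_two hα]
    push_cast
    linear_combination (cfA α (t + 2) : ℝ) * cfQ_mul_sub_cfP hα (t + 1) + cfQ_mul_sub_cfP hα t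

lemma cfQ_succ_mul_cfGaussProd_add (hα : Irrational α) :
    ∀ t, (cfQ α (t + 1) : ℝ) * cfGaussProd α t + cfQ α t * cfGaussProd α (t + 1) = 1
  | 0 => by
    rw [cfQ_one, cfQ_zero, cfGaussProd_one hα, cfGaussProd_zero]
    push_cast
    ring
  | t + 1 => by
    rw [cfQ_add_two, cfGaussProd_add_two hα]
    push_cast
    linear_combination cfQ_succ_mul_cfGaussProd_add hα t

lemma one_div_two_mul_cfQ_succ_le_cfGaussProd (hα : Irrational α) (t : ℕ) :
    1 / (2 * (cfQ α (t + 1) : ℝ)) ≤ cfGaussProd α t := by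
  have hq : (cfQ α t : ℝ) ≤ cfQ α (t + 1) := by exact_mod_cast cfQ_le_cfQ_succ hα t
  have hq0 : (1 : ℝ) ≤ cfQ α t := by exact_mod_cast one_le_cfQ hα t
  rw [div_le_iff₀ (by linarith)]
  nlinarith [cfQ_succ_mul_cfGaussProd_add hα t, cfGaussProd_succ_le hα t,
    cfGaussProd_pos hα (t + 1)]

lemma exists_mul_cfQ_add_mul_cfQ_eq (s : ℕ) (k c : ℤ) :
    ∃ x y : ℤ, x * cfQ α (s + 1) + y * cfQ α s = k ∧ x * cfP α (s + 1) + y * cfP α s = c := by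
  have hdet := cfP_succ_mul_cfQ_sub_cfP_mul_cfQ_succ (α := α) s
  set d : ℤ := (-1) ^ s
  have hd : d * d = 1 := by rw [← pow_add, ← two_mul, pow_mul]; norm_num
  refine ⟨d * (c * cfQ α s - k * cfP α s), d * (k * cfP α (s + 1) - c * cfQ α (s + 1)), ?_, ?_⟩
  · linear_combination (d * k) * hdet + k * hd
  · linear_combination (d * c) * hdet + c * hd

lemma ne_zero_and_mul_nonpos_of_mul_add_mul_eq {a b k x y : ℤ} (ha : 0 ≤ a) (hk : 0 < k)
    (hkb : k < b) (h : x * b + y * a = k) : y ≠ 0 ∧ x * y ≤ 0 := by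
  refine ⟨?_, ?_⟩
  · rintro rfl
    rcases le_or_gt x 0 with hx | hx <;> nlinarith
  · by_contra! hxy
    rcases mul_pos_iff.1 hxy with ⟨hx, hy⟩ | ⟨hx, hy⟩ <;> nlinarith

lemma abs_mul_le_abs_mul_sub_mul {x y b c : ℝ} (hc : 0 ≤ c) (hxy : x * y ≤ 0) :
    |y| * b ≤ |y * b - x * c| := by
  rcases lt_trichotomy y 0 with hy | rfl | hy
  · have hx : 0 ≤ x := nonneg_of_mul_nonpos_left hxy hy
    rw [abs_of_neg hy]
    nlinarith [neg_le_abs (y * b - x * c)]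
  · simp only [abs_zero, zero_mul, abs_nonneg]
  · have hx : x ≤ 0 := nonpos_of_mul_nonpos_left hxy hy
    rw [abs_of_pos hy]
    nlinarith [le_abs_self (y * b - x * c)]

/-- The errors `q_s α - p_s` and `q_{s+1} α - p_{s+1}` have opposite signs, and so do `x` and `y`;
hence `‖kα‖ = |y| γ₀⋯γ_s + |x| γ₀⋯γ_{s+1}`. -/
lemma exists_abs_mul_cfGaussProd_le_distZ (hα : Irrational α) {s k : ℕ} (hk : 1 ≤ k)
    (hkq : (k : ℤ) < cfQ α (s + 1)) :
    ∃ x y : ℤ, x * cfQ α (s + 1) + y * cfQ α s = k ∧ y ≠ 0 ∧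
      |(y : ℝ)| * cfGaussProd α s ≤ distZ (k * α) := by
  obtain ⟨x, y, hk_eq, hc_eq⟩ := exists_mul_cfQ_add_mul_cfQ_eq (α := α) s k (round (k * α))
  obtain ⟨hy, hxy⟩ := ne_zero_and_mul_nonpos_of_mul_add_mul_eq
    (by linarith [one_le_cfQ hα s]) (by omega) hkq hk_eq
  have hkR : (x : ℝ) * cfQ α (s + 1) + y * cfQ α s = k := by exact_mod_cast hk_eq
  have hcR : (x : ℝ) * cfP α (s + 1) + y * cfP α s = round (k * α) := by exact_mod_cast hc_eq
  have herr : (k : ℝ) * α - round (k * α) =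
      (-1) ^ s * (y * cfGaussProd α s - x * cfGaussProd α (s + 1)) := by
    linear_combination -α * hkR + hcR + (x : ℝ) * cfQ_mul_sub_cfP hα (s + 1) +
      (y : ℝ) * cfQ_mul_sub_cfP hα s
  refine ⟨x, y, hk_eq, hy, ?_⟩
  rw [distZ, herr, abs_mul, abs_pow, abs_neg, abs_one, one_pow, one_mul]
  exact abs_mul_le_abs_mul_sub_mul (cfGaussProd_pos hα (s + 1)).le (by exact_mod_cast hxy)

lemma one_div_two_mul_cfQ_succ_le_distZ (hα : Irrational α) {s k : ℕ} (hk : 1 ≤ k)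
    (hkq : (k : ℤ) < cfQ α (s + 1)) :
    1 / (2 * (cfQ α (s + 1) : ℝ)) ≤ distZ (k * α) := by
  obtain ⟨x, y, -, hy, hdist⟩ := exists_abs_mul_cfGaussProd_le_distZ hα hk hkq
  have hy1 : (1 : ℝ) ≤ |(y : ℝ)| := by exact_mod_cast Int.one_le_abs hy
  calc 1 / (2 * (cfQ α (s + 1) : ℝ)) ≤ cfGaussProd α s :=
        one_div_two_mul_cfQ_succ_le_cfGaussProd hα s
    _ ≤ |(y : ℝ)| * cfGaussProd α s := le_mul_of_one_le_left (cfGaussProd_pos hα s).le hy1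
    _ ≤ distZ (k * α) := hdist

lemma one_div_four_mul_le_distZ (hα : Irrational α) {s k n : ℕ} (hk : 1 ≤ k) (hkn : k ≤ n)
    (hqn : cfQ α s ≤ n) (hnq : (n : ℤ) < cfQ α (s + 1)) (hdvd : ¬ cfQ α s ∣ k) :
    1 / (4 * (n : ℝ)) ≤ distZ (k * α) := by
  have hq0 := one_le_cfQ hα s
  have hkq : (k : ℤ) < cfQ α (s + 1) := by omega
  rcases le_or_gt (cfQ α (s + 1)) (2 * n) with hsmall | hlarge
  · calc 1 / (4 * (n : ℝ)) ≤ 1 / (2 * (cfQ α (s + 1) : ℝ)) := by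
          apply one_div_le_one_div_of_le
          · exact_mod_cast (by omega : 0 < 2 * cfQ α (s + 1))
          · exact_mod_cast (by omega : 2 * cfQ α (s + 1) ≤ 4 * n)
      _ ≤ distZ (k * α) := one_div_two_mul_cfQ_succ_le_distZ hα hk hkq
  obtain ⟨x, y, hk_eq, -, hdist⟩ := exists_abs_mul_cfGaussProd_le_distZ hα hk hkq
  have hx : x ≠ 0 := by
    rintro rfl
    exact hdvd ⟨y, by linear_combination -hk_eq⟩
  have hyq : cfQ α (s + 1) - k ≤ |y| * cfQ α s :=
    calc cfQ α (s + 1) - k ≤ |x| * cfQ α (s + 1) - k := by nlinarith [Int.one_le_abs hx]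
      _ = |x * cfQ α (s + 1)| - |(k : ℤ)| := by
          rw [abs_mul, abs_of_pos (by omega : 0 < cfQ α (s + 1)), Nat.abs_cast]
      _ ≤ |x * cfQ α (s + 1) - k| := abs_sub_abs_le_abs_sub _ _
      _ = |y| * cfQ α s := by
          rw [show x * cfQ α (s + 1) - k = -(y * cfQ α s) by linear_combination hk_eq, abs_neg,
            abs_mul, abs_of_pos (by omega : 0 < cfQ α s)]
  have hyn : (cfQ α (s + 1) : ℝ) ≤ 2 * n * |(y : ℝ)| := by
    have : cfQ α (s + 1) ≤ 2 * n * |y| := by nlinarith [abs_nonneg y]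
    exact_mod_cast this
  have hB := one_div_two_mul_cfQ_succ_le_cfGaussProd hα s
  have hq1 : (0 : ℝ) < cfQ α (s + 1) := by
    exact_mod_cast zero_lt_one.trans_le (one_le_cfQ hα (s + 1))
  have hn : (0 : ℝ) < n := by exact_mod_cast (by omega : (0 : ℤ) < n)
  calc 1 / (4 * (n : ℝ)) ≤ |(y : ℝ)| * (1 / (2 * (cfQ α (s + 1) : ℝ))) := by
        rw [div_le_iff₀ (by positivity)]
        field_simp
        linarith
    _ ≤ |(y : ℝ)| * cfGaussProd α s := by gcongr
    _ ≤ distZ (k * α) := hdist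

lemma pow_mul_pow_le_Dalpha (hα : Irrational α) {s n M Q : ℕ} (hQ : cfQ α s = Q) (hQn : Q ≤ n)
    (hnq : (n : ℤ) < cfQ α (s + 1)) (hM : M ≤ n) :
    (2 : ℝ)⁻¹ ^ M * ((n : ℝ) ^ 2)⁻¹ ^ M * (cfQ α (s + 1) : ℝ)⁻¹ ^ (M / Q) ≤ Dalpha α M := by
  have hQ1 : 1 ≤ Q := by exact_mod_cast hQ ▸ one_le_cfQ hα s
  have hn : (1 : ℝ) ≤ n := by exact_mod_cast hQ1.trans hQn
  have hq1 : (0 : ℝ) < cfQ α (s + 1) := by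
    exact_mod_cast zero_lt_one.trans_le (one_le_cfQ hα (s + 1))
  have hfactor : ∀ k ∈ Finset.Icc 1 M,
      (2 : ℝ)⁻¹ * ((n : ℝ) ^ 2)⁻¹ * (if Q ∣ k then (cfQ α (s + 1) : ℝ)⁻¹ else 1) ≤
        distZ (k * α) := by
    intro k hk
    obtain ⟨hk1, hkM⟩ := Finset.mem_Icc.1 hk
    have hkq : (k : ℤ) < cfQ α (s + 1) := by omega
    split_ifs with hdvd
    · refine le_trans ?_ (one_div_two_mul_cfQ_succ_le_distZ hα hk1 hkq)
      rw [← mul_inv, ← mul_inv, one_div]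
      exact inv_anti₀ (by positivity) (by nlinarith [one_le_pow₀ (n := 2) hn])
    · have hn2 : (2 : ℝ) ≤ n := by
        have : Q ≠ 1 := by rintro rfl; exact hdvd (one_dvd k)
        exact_mod_cast (by omega : 2 ≤ n)
      refine le_trans ?_ (one_div_four_mul_le_distZ hα hk1 (hkM.trans hM) (by omega) hnq
        (by rw [hQ]; exact_mod_cast hdvd))
      rw [mul_one, ← mul_inv, one_div]
      exact inv_anti₀ (by positivity) (by nlinarith)
  calc (2 : ℝ)⁻¹ ^ M * ((n : ℝ) ^ 2)⁻¹ ^ M * (cfQ α (s + 1) : ℝ)⁻¹ ^ (M / Q)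
      = ∏ k ∈ Finset.Icc 1 M,
          (2 : ℝ)⁻¹ * ((n : ℝ) ^ 2)⁻¹ * (if Q ∣ k then (cfQ α (s + 1) : ℝ)⁻¹ else 1) := by
        rw [Finset.prod_mul_distrib, Finset.prod_const, Nat.card_Icc, ← Finset.prod_filter,
          Finset.prod_const, ← Nat.Ioc_filter_dvd_card_eq_div, mul_pow, add_tsub_cancel_right]
        rfl
    _ ≤ Dalpha α M := Finset.prod_le_prod (fun k _ => by positivity) hfactor

lemma two_rpow_neg_mul_rpow_neg_mul_rpow_neg_le {n b : ℕ} {q x : ℝ} (hq : 1 ≤ q) (hb : b ≤ x) :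
    (2 : ℝ) ^ (-(n : ℝ)) * (n : ℝ) ^ (-(2 * (n : ℝ))) * q ^ (-x) ≤
      (2 : ℝ)⁻¹ ^ n * ((n : ℝ) ^ 2)⁻¹ ^ n * q⁻¹ ^ b := by
  have hqb : q ^ (-x) ≤ q⁻¹ ^ b := by
    rw [inv_pow, ← Real.rpow_natCast, ← Real.rpow_neg (by linarith)]
    exact Real.rpow_le_rpow_of_exponent_le hq (neg_le_neg hb)
  rw [Real.rpow_neg zero_le_two, Real.rpow_neg (Nat.cast_nonneg n), Real.rpow_natCast,
    show 2 * (n : ℝ) = ((2 * n : ℕ) : ℝ) by push_cast; ring, Real.rpow_natCast, pow_mul,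
    inv_pow, inv_pow]
  gcongr

end ContinuedFraction

theorem Dalpha_mul_lower_bound_general (α : ℝ) (hα : Irrational α)
    (n m s : ℕ) (hm : m ≤ n) (h1 : (cfQ α s : ℝ) ≤ n) (h2 : (n : ℝ) < cfQ α (s + 1)) :
    Dalpha α m * Dalpha α (n - m) ≥
      (2 : ℝ) ^ (-(n : ℝ)) * (n : ℝ) ^ (-(2 * (n : ℝ))) *
        ((cfQ α (s + 1) : ℝ)) ^ (-((n : ℝ) / (cfQ α s : ℝ))) := by
  obtain ⟨Q, hQ⟩ := Int.eq_ofNat_of_zero_le (zero_le_one.trans (one_le_cfQ hα s))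
  have hQn : Q ≤ n := by exact_mod_cast hQ ▸ h1
  have hnq : (n : ℤ) < cfQ α (s + 1) := by exact_mod_cast h2
  have hmult : ((m / Q + (n - m) / Q : ℕ) : ℝ) ≤ n / Q :=
    calc ((m / Q + (n - m) / Q : ℕ) : ℝ) ≤ (m : ℝ) / Q + ((n - m : ℕ) : ℝ) / Q := by
          push_cast [Nat.cast_add]
          gcongr <;> exact Nat.cast_div_le
      _ = n / Q := by rw [Nat.cast_sub hm]; ring
  have hq₁ : (1 : ℝ) ≤ cfQ α (s + 1) := by exact_mod_cast one_le_cfQ hα (s + 1)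
  set q₁ : ℝ := (cfQ α (s + 1) : ℝ)
  rw [ge_iff_le, hQ, Int.cast_natCast]
  calc _ ≤ (2 : ℝ)⁻¹ ^ n * ((n : ℝ) ^ 2)⁻¹ ^ n * q₁⁻¹ ^ (m / Q + (n - m) / Q) :=
        two_rpow_neg_mul_rpow_neg_mul_rpow_neg_le hq₁ hmult
    _ = ((2 : ℝ)⁻¹ ^ m * ((n : ℝ) ^ 2)⁻¹ ^ m * q₁⁻¹ ^ (m / Q)) *
          ((2 : ℝ)⁻¹ ^ (n - m) * ((n : ℝ) ^ 2)⁻¹ ^ (n - m) * q₁⁻¹ ^ ((n - m) / Q)) := by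
        rw [← Nat.add_sub_of_le hm]
        simp only [pow_add, add_tsub_cancel_left]
        ring
    _ ≤ Dalpha α m * Dalpha α (n - m) :=
        mul_le_mul (pow_mul_pow_le_Dalpha hα hQ hQn hnq hm)
          (pow_mul_pow_le_Dalpha hα hQ hQn hnq (Nat.sub_le n m))
          (mul_nonneg (by positivity) (pow_nonneg (inv_nonneg.2 (by linarith)) _))
          (Finset.prod_nonneg fun _ _ => abs_nonneg _)

theorem Dalpha_mul_lower_bound (α : ℝ) (hα : Irrational α) (h01 : α ∈ Set.Ioo (0 : ℝ) 1)
    (n m s : ℕ) (hm : m ≤ n) (h1 : (cfQ α s : ℝ) ≤ n) (h2 : (n : ℝ) < cfQ α (s + 1)) :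
    Dalpha α m * Dalpha α (n - m) ≥
      (2 : ℝ) ^ (-(n : ℝ)) * (n : ℝ) ^ (-(2 * (n : ℝ))) *
        ((cfQ α (s + 1) : ℝ)) ^ (-((n : ℝ) / (cfQ α s : ℝ))) :=
  Dalpha_mul_lower_bound_general α hα n m s hm h1 h2
end
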